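/- Let N ≥ 0 and let V be any subspace of Ŝ_N(K) with Ŝ₀(K) ⊆ V, equipped with any norm, with closed unit ball B. Then V is regular: the functions z ↦ (1/t)·log sup_{f∈B} |f(tz)| converge to h_K(z) uniformly on every compact subset of ℂⁿ as t → +∞. In particular, for every N ≥ 0 the space Ŝ_N(K) of quasi-polynomials is regular. -/

import Mathlib

open Filter Topology MeasureTheory

noncomputable def pair {n : ℕ} (ξ z : EuclideanSpace ℂ (Fin n)) : ℂ :=
  ∑ j, ξ j * z j

noncomputable def suppFn {n : ℕ} (K : Finset (EuclideanSpace ℂ (Fin n))) (hK : K.Nonempty)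
    (z : EuclideanSpace ℂ (Fin n)) : ℝ :=
  K.sup' hK fun ξ => (pair ξ z).re

def IsQuasiPolyDeg {n : ℕ} (K : Finset (EuclideanSpace ℂ (Fin n))) (N : ℕ)
    (f : EuclideanSpace ℂ (Fin n) → ℂ) : Prop :=
  ∃ p : EuclideanSpace ℂ (Fin n) → MvPolynomial (Fin n) ℂ,
    (∀ ξ, (p ξ).totalDegree ≤ N) ∧
    ∀ z, f z = ∑ ξ ∈ K, MvPolynomial.eval (fun j => z j) (p ξ) * Complex.exp (pair ξ z)

def IsExpSum {n : ℕ} (K : Finset (EuclideanSpace ℂ (Fin n)))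
    (f : EuclideanSpace ℂ (Fin n) → ℂ) : Prop :=
  ∃ c : EuclideanSpace ℂ (Fin n) → ℂ, ∀ z, f z = ∑ ξ ∈ K, c ξ * Complex.exp (pair ξ z)

def IsRegularFor {n : ℕ} (K : Finset (EuclideanSpace ℂ (Fin n))) (hK : K.Nonempty)
    (B : Set (EuclideanSpace ℂ (Fin n) → ℂ)) : Prop :=
  ∀ S : Set (EuclideanSpace ℂ (Fin n)), IsCompact S →
    TendstoUniformlyOn
      (fun (t : ℝ) z => (1 / t) * Real.log (sSup ((fun f => ‖f (t • z)‖) '' B)))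
      (suppFn K hK) atTop S

def unitBall {n : ℕ} (V : Submodule ℂ (EuclideanSpace ℂ (Fin n) → ℂ)) (nrm : V → ℝ) :
    Set (EuclideanSpace ℂ (Fin n) → ℂ) :=
  {f | ∃ g : V, nrm g ≤ 1 ∧ (g : EuclideanSpace ℂ (Fin n) → ℂ) = f}

def IsNormOn {n : ℕ} (V : Submodule ℂ (EuclideanSpace ℂ (Fin n) → ℂ)) (nrm : V → ℝ) : Prop :=
  (∀ g : V, nrm g = 0 ↔ g = 0) ∧
  (∀ (a : ℂ) (g : V), nrm (a • g) = ‖a‖ * nrm g) ∧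
  (∀ g₁ g₂ : V, nrm (g₁ + g₂) ≤ nrm g₁ + nrm g₂)

def suppFace {n : ℕ} (K : Finset (EuclideanSpace ℂ (Fin n)))
    (x : EuclideanSpace ℂ (Fin n)) : Set (EuclideanSpace ℂ (Fin n)) :=
  {ξ ∈ convexHull ℝ (K : Set (EuclideanSpace ℂ (Fin n))) |
    ∀ η ∈ convexHull ℝ (K : Set (EuclideanSpace ℂ (Fin n))), (pair η x).re ≤ (pair ξ x).re}

/-!
Since `V` is finite-dimensional, the coordinates of `g ∈ V` in a basis are bounded by the norm
of `g`, so every `f` in the unit ball satisfies `|f(w)| ≤ A (1 + |w|)^N e^{h_K(w)}`. Conversely,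
the normalized exponentials `a e^{⟨ξ,·⟩}`, `ξ ∈ K`, lie in the unit ball and attain `a e^{h_K}`.
At `w = t z` the polynomial factor only adds `O(log t / t)` to `(1/t) log sup_B |f(t z)|`.
-/

open Real in
theorem tendstoUniformlyOn_one_div_mul_log {X : Type*} {S : Set X} {h : X → ℝ}
    {M : ℝ → X → ℝ} {a A : ℝ} (N : ℕ) (ha : 0 < a)
    (hlow : ∀ᶠ t in atTop, ∀ z ∈ S, a * exp (t * h z) ≤ M t z)
    (hup : ∀ᶠ t in atTop, ∀ z ∈ S, M t z ≤ A * t ^ N * exp (t * h z)) :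
    TendstoUniformlyOn (fun t z => 1 / t * log (M t z)) h atTop S := by
  have hlo : Tendsto (fun t => log a / t) atTop (𝓝 0) :=
    tendsto_const_nhds.div_atTop tendsto_id
  have hhi : Tendsto (fun t => (log A + N * log t) / t) atTop (𝓝 0) := by
    have hlog : Tendsto (fun t => log t / t) atTop (𝓝 0) := by
      simpa using tendsto_pow_log_div_mul_add_atTop 1 0 1 one_ne_zero
    simpa [add_div, mul_div_assoc] using
      (tendsto_const_nhds.div_atTop tendsto_id).add (hlog.const_mul (N : ℝ))
  rw [Metric.tendstoUniformlyOn_iff]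
  intro ε hε
  filter_upwards [hlow, hup, eventually_gt_atTop 0, Metric.tendsto_nhds.mp hlo ε hε,
    Metric.tendsto_nhds.mp hhi ε hε] with t hl hu ht hεlo hεhi z hz
  have hMpos : 0 < M t z := (by positivity : 0 < a * exp (t * h z)).trans_le (hl z hz)
  have hApos : 0 < A :=
    pos_of_mul_pos_left (pos_of_mul_pos_left (hMpos.trans_le (hu z hz)) (exp_pos _).le)
      (by positivity)
  have hlower : log a + t * h z ≤ log (M t z) := by
    simpa [log_mul, ha.ne', (exp_pos _).ne'] using log_le_log (by positivity) (hl z hz)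
  have hupper : log (M t z) ≤ log A + N * log t + t * h z := by
    simpa [log_mul, log_pow, hApos.ne', ht.ne', (exp_pos _).ne'] using log_le_log hMpos (hu z hz)
  have hdiff : 1 / t * log (M t z) - h z = (log (M t z) - t * h z) / t := by
    field_simp
  rw [Real.dist_eq, abs_sub_comm, hdiff, abs_lt]
  rw [Real.dist_eq, sub_zero, abs_lt] at hεlo hεhi
  constructor
  · calc -ε < log a / t := hεlo.1
      _ ≤ _ := by gcongr; linarith
  · calc _ ≤ (log A + N * log t) / t := by gcongr; linarith
      _ < ε := hεhi.2

theorem MvPolynomial.norm_eval_le_of_forall_norm_le {σ 𝕜 : Type*} [Fintype σ] [NormedField 𝕜]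
    (q : MvPolynomial σ 𝕜) {x : σ → 𝕜} {r : ℝ} (hr : 1 ≤ r) (hx : ∀ i, ‖x i‖ ≤ r) {N : ℕ}
    (hq : q.totalDegree ≤ N) :
    ‖MvPolynomial.eval x q‖ ≤ (∑ α ∈ q.support, ‖q.coeff α‖) * r ^ N := by
  rw [MvPolynomial.eval_eq', Finset.sum_mul]
  refine (norm_sum_le _ _).trans (Finset.sum_le_sum fun α hα => ?_)
  rw [norm_mul, norm_prod]
  gcongr
  calc ∏ i, ‖x i ^ α i‖ ≤ ∏ i, r ^ α i := by
        gcongr with i; rw [norm_pow]; gcongr; exact hx i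
    _ = r ^ (α.sum fun _ e => e) := by
        rw [Finset.prod_pow_eq_pow_sum, Finsupp.sum_fintype _ _ fun _ => rfl]
    _ ≤ r ^ N := pow_le_pow_right₀ hr ((MvPolynomial.le_totalDegree hα).trans hq)

variable {n : ℕ}

theorem pair_smul (ξ z : EuclideanSpace ℂ (Fin n)) (t : ℝ) :
    pair ξ (t • z) = t * pair ξ z := by
  simp only [pair, Finset.mul_sum, PiLp.smul_apply, Complex.real_smul]
  exact Finset.sum_congr rfl fun j _ => by ring

theorem suppFn_smul (K : Finset (EuclideanSpace ℂ (Fin n))) (hK : K.Nonempty)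
    {t : ℝ} (ht : 0 ≤ t) (z : EuclideanSpace ℂ (Fin n)) :
    suppFn K hK (t • z) = t * suppFn K hK z := by
  rw [suppFn, suppFn,
    Finset.apply_sup'_eq_sup'_comp hK (t * ·) fun x y => mul_max_of_nonneg x y ht]
  simp [pair_smul]

theorem IsQuasiPolyDeg.exists_norm_le {K : Finset (EuclideanSpace ℂ (Fin n))} {N : ℕ}
    {f : EuclideanSpace ℂ (Fin n) → ℂ} (hf : IsQuasiPolyDeg K N f) (hK : K.Nonempty) :
    ∃ D, 0 ≤ D ∧ ∀ w, ‖f w‖ ≤ D * ((1 + ‖w‖) ^ N * Real.exp (suppFn K hK w)) := by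
  obtain ⟨p, hdeg, hfp⟩ := hf
  refine ⟨∑ ξ ∈ K, ∑ α ∈ (p ξ).support, ‖(p ξ).coeff α‖, by positivity, fun w => ?_⟩
  rw [hfp w, Finset.sum_mul]
  refine (norm_sum_le _ _).trans (Finset.sum_le_sum fun ξ hξ => ?_)
  rw [norm_mul, Complex.norm_exp, ← mul_assoc]
  gcongr
  · exact (p ξ).norm_eval_le_of_forall_norm_le (by simp)
      (fun j => (PiLp.norm_apply_le w j).trans (by simp)) (hdeg ξ)
  · exact Finset.le_sup' (fun ξ => (pair ξ w).re) hξ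

noncomputable def quasiPolyMap (K : Finset (EuclideanSpace ℂ (Fin n))) (N : ℕ) :
    (K → MvPolynomial.restrictTotalDegree (Fin n) ℂ N) →ₗ[ℂ] (EuclideanSpace ℂ (Fin n) → ℂ) where
  toFun p z := ∑ ξ : K, MvPolynomial.eval (fun j => z j) (p ξ) * Complex.exp (pair ξ z)
  map_add' p q := by funext z; simp [add_mul, Finset.sum_add_distrib]
  map_smul' c p := by funext z; simp [Finset.mul_sum, mul_assoc]

theorem IsQuasiPolyDeg.mem_range_quasiPolyMap {K : Finset (EuclideanSpace ℂ (Fin n))} {N : ℕ}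
    {f : EuclideanSpace ℂ (Fin n) → ℂ} (hf : IsQuasiPolyDeg K N f) :
    f ∈ LinearMap.range (quasiPolyMap K N) := by
  obtain ⟨p, hdeg, hfp⟩ := hf
  refine ⟨fun ξ => ⟨p ξ, (MvPolynomial.mem_restrictTotalDegree _ _ _).mpr (hdeg ξ)⟩, ?_⟩
  funext z
  rw [hfp z]
  exact Finset.sum_coe_sort K fun ξ =>
    MvPolynomial.eval (fun j => z j) (p ξ) * Complex.exp (pair ξ z)

theorem finiteDimensional_of_forall_isQuasiPolyDeg {K : Finset (EuclideanSpace ℂ (Fin n))}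
    {N : ℕ} {V : Submodule ℂ (EuclideanSpace ℂ (Fin n) → ℂ)}
    (hV : ∀ f ∈ V, IsQuasiPolyDeg K N f) : FiniteDimensional ℂ V :=
  Submodule.finiteDimensional_of_le fun f hf => (hV f hf).mem_range_quasiPolyMap

theorem LinearMap.exists_norm_apply_le {𝕜 W E : Type*} [NontriviallyNormedField 𝕜]
    [CompleteSpace 𝕜] [NormedAddCommGroup W] [NormedSpace 𝕜 W] [FiniteDimensional 𝕜 W]
    (T : W →ₗ[𝕜] E → 𝕜) (φ : E → ℝ) (hT : ∀ g, ∃ D, 0 ≤ D ∧ ∀ w, ‖T g w‖ ≤ D * φ w) :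
    ∃ A, 0 ≤ A ∧ ∀ g w, ‖T g w‖ ≤ A * ‖g‖ * φ w := by
  let b := Module.finBasis 𝕜 W
  let coord i : W →L[𝕜] 𝕜 := LinearMap.toContinuousLinearMap (b.coord i)
  choose D hD0 hD using fun i => hT (b i)
  refine ⟨∑ i, ‖coord i‖ * D i,
    Finset.sum_nonneg fun i _ => mul_nonneg (norm_nonneg _) (hD0 i), fun g w => ?_⟩
  have hcoord i : ‖b.repr g i‖ ≤ ‖coord i‖ * ‖g‖ := (coord i).le_opNorm g
  calc ‖T g w‖ = ‖∑ i, b.repr g i * T (b i) w‖ := by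
        conv_lhs => rw [← b.sum_repr g]
        simp only [map_sum, map_smul, Finset.sum_apply, Pi.smul_apply, smul_eq_mul]
    _ ≤ ∑ i, ‖coord i‖ * ‖g‖ * (D i * φ w) := by
        refine (norm_sum_le _ _).trans (Finset.sum_le_sum fun i _ => ?_)
        rw [norm_mul]
        exact mul_le_mul (hcoord i) (hD i w) (norm_nonneg _) (by positivity)
    _ = (∑ i, ‖coord i‖ * D i) * ‖g‖ * φ w := by
        rw [Finset.sum_mul, Finset.sum_mul]
        exact Finset.sum_congr rfl fun i _ => by ring

namespace IsNormOn

variable {V : Submodule ℂ (EuclideanSpace ℂ (Fin n) → ℂ)} {nrm : V → ℝ}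

theorem map_neg_eq_map (hnrm : IsNormOn V nrm) (g : V) : nrm (-g) = nrm g := by
  have h := hnrm.2.1 (-1) g
  rwa [neg_one_smul ℂ g, norm_neg, norm_one, one_mul] at h

def addGroupNorm (hnrm : IsNormOn V nrm) : AddGroupNorm V where
  toFun := nrm
  map_zero' := (hnrm.1 0).mpr rfl
  add_le' := hnrm.2.2
  neg' := hnrm.map_neg_eq_map
  eq_zero_of_map_eq_zero' g := (hnrm.1 g).mp

theorem nonneg (hnrm : IsNormOn V nrm) (g : V) : 0 ≤ nrm g :=
  apply_nonneg hnrm.addGroupNorm g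

theorem exists_norm_apply_le [FiniteDimensional ℂ V] (hnrm : IsNormOn V nrm)
    (φ : EuclideanSpace ℂ (Fin n) → ℝ) (hφ : ∀ w, 0 ≤ φ w)
    (hV : ∀ f ∈ V, ∃ D, 0 ≤ D ∧ ∀ w, ‖f w‖ ≤ D * φ w) :
    ∃ A, 0 ≤ A ∧ ∀ f ∈ unitBall V nrm, ∀ w, ‖f w‖ ≤ A * φ w := by
  let _ : NormedAddCommGroup V := hnrm.addGroupNorm.toNormedAddCommGroup
  let _ : NormedSpace ℂ V := ⟨fun a g => (hnrm.2.1 a g).le⟩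
  obtain ⟨A, hA0, hA⟩ := V.subtype.exists_norm_apply_le φ fun g => hV g g.2
  refine ⟨A, hA0, ?_⟩
  rintro _ ⟨g, hg, rfl⟩ w
  calc ‖(g : EuclideanSpace ℂ (Fin n) → ℂ) w‖ ≤ A * nrm g * φ w := hA g w
    _ ≤ A * 1 * φ w := by gcongr; exact hφ w
    _ = A * φ w := by rw [mul_one]

theorem ofReal_smul_mem_unitBall (hnrm : IsNormOn V nrm) {g : V} {r : ℝ} (hr : 0 ≤ r)
    (hg : r * nrm g ≤ 1) : (r : ℂ) • (g : EuclideanSpace ℂ (Fin n) → ℂ) ∈ unitBall V nrm :=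
  ⟨(r : ℂ) • g, by rwa [hnrm.2.1, Complex.norm_real, Real.norm_of_nonneg hr], rfl⟩

end IsNormOn

section Regularity

variable {K : Finset (EuclideanSpace ℂ (Fin n))} {V : Submodule ℂ (EuclideanSpace ℂ (Fin n) → ℂ)}
  {nrm : V → ℝ}

theorem exists_pos_smul_exp_mem_unitBall (hK : K.Nonempty) (hnrm : IsNormOn V nrm)
    (hV0 : ∀ c : EuclideanSpace ℂ (Fin n) → ℂ,
      (fun z => ∑ ξ ∈ K, c ξ * Complex.exp (pair ξ z)) ∈ V) :
    ∃ a : ℝ, 0 < a ∧ ∀ ξ ∈ K, (fun z => (a : ℂ) * Complex.exp (pair ξ z)) ∈ unitBall V nrm := by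
  classical
  have hexp ξ (hξ : ξ ∈ K) : (fun z => Complex.exp (pair ξ z)) ∈ V := by
    simpa [hξ] using hV0 fun η => if η = ξ then 1 else 0
  let e (ξ : K) : V := ⟨_, hexp ξ ξ.2⟩
  have he_pos ξ : 0 < nrm (e ξ) := by
    refine (hnrm.nonneg _).lt_of_ne' fun h => ?_
    have h0 := congr_fun (congr_arg Subtype.val ((hnrm.1 _).mp h)) 0
    simp [e, pair] at h0
  obtain ⟨ξ₀, -, hmax⟩ := K.attach.exists_max_image (fun ξ => nrm (e ξ)) (by simpa using hK)
  refine ⟨(nrm (e ξ₀))⁻¹, inv_pos.mpr (he_pos ξ₀), fun ξ hξ => ?_⟩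
  refine hnrm.ofReal_smul_mem_unitBall (g := e ⟨ξ, hξ⟩) (inv_pos.mpr (he_pos ξ₀)).le ?_
  rw [inv_mul_le_one₀ (he_pos ξ₀)]
  exact hmax _ (K.mem_attach _)

theorem sSup_norm_apply_unitBall_mem_Icc {N : ℕ} (hK : K.Nonempty)
    (hV : ∀ f ∈ V, IsQuasiPolyDeg K N f)
    (hV0 : ∀ c : EuclideanSpace ℂ (Fin n) → ℂ,
      (fun z => ∑ ξ ∈ K, c ξ * Complex.exp (pair ξ z)) ∈ V)
    (hnrm : IsNormOn V nrm) :
    ∃ a A : ℝ, 0 < a ∧ 0 ≤ A ∧ ∀ w, sSup ((fun f => ‖f w‖) '' unitBall V nrm) ∈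
      Set.Icc (a * Real.exp (suppFn K hK w))
        (A * ((1 + ‖w‖) ^ N * Real.exp (suppFn K hK w))) := by
  have := finiteDimensional_of_forall_isQuasiPolyDeg hV
  obtain ⟨A, hA0, hA⟩ := hnrm.exists_norm_apply_le _ (fun w => by positivity)
    fun f hf => (hV f hf).exists_norm_le hK
  obtain ⟨a, ha, haB⟩ := exists_pos_smul_exp_mem_unitBall hK hnrm hV0
  refine ⟨a, A, ha, hA0, fun w => ?_⟩
  obtain ⟨ξ, hξ, hmax⟩ := K.exists_mem_eq_sup' hK fun ξ => (pair ξ w).re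
  have hmem : a * Real.exp (suppFn K hK w) ∈ (fun f => ‖f w‖) '' unitBall V nrm :=
    ⟨_, haB ξ hξ, by simp [Complex.norm_exp, suppFn, hmax, ha.le]⟩
  have hub : ∀ y ∈ (fun f => ‖f w‖) '' unitBall V nrm,
      y ≤ A * ((1 + ‖w‖) ^ N * Real.exp (suppFn K hK w)) := by
    rintro _ ⟨f, hf, rfl⟩
    exact hA f hf w
  exact ⟨le_csSup ⟨_, hub⟩ hmem, csSup_le ⟨_, hmem⟩ hub⟩

end Regularity

theorem stmt4_general (n N : ℕ) (K : Finset (EuclideanSpace ℂ (Fin n))) (hK : K.Nonempty)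
    (V : Submodule ℂ (EuclideanSpace ℂ (Fin n) → ℂ))
    (hV : ∀ f ∈ V, IsQuasiPolyDeg K N f)
    (hV0 : ∀ c : EuclideanSpace ℂ (Fin n) → ℂ,
      (fun z => ∑ ξ ∈ K, c ξ * Complex.exp (pair ξ z)) ∈ V)
    (nrm : V → ℝ) (hnrm : IsNormOn V nrm) :
    IsRegularFor K hK (unitBall V nrm) := by
  obtain ⟨a, A, ha, hA0, hbounds⟩ := sSup_norm_apply_unitBall_mem_Icc hK hV hV0 hnrm
  intro S hS
  obtain ⟨R, hR⟩ := isBounded_iff_forall_norm_le.mp hS.isBounded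
  refine tendstoUniformlyOn_one_div_mul_log (A := A * (1 + R) ^ N) N ha ?_ ?_
  · filter_upwards [eventually_ge_atTop 0] with t ht z _
    simpa [suppFn_smul K hK ht] using (hbounds (t • z)).1
  · filter_upwards [eventually_ge_atTop 1] with t ht z hz
    have hnorm : 1 + ‖t • z‖ ≤ (1 + R) * t := by
      rw [norm_smul, Real.norm_of_nonneg (by linarith)]
      nlinarith [hR z hz]
    calc _ ≤ A * ((1 + ‖t • z‖) ^ N * Real.exp (suppFn K hK (t • z))) := (hbounds (t • z)).2
      _ ≤ A * (((1 + R) * t) ^ N * Real.exp (t * suppFn K hK z)) := by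
        rw [suppFn_smul K hK (by linarith)]
        gcongr
      _ = A * (1 + R) ^ N * t ^ N * Real.exp (t * suppFn K hK z) := by rw [mul_pow]; ring

/-- any normed subspace `V` with `Ŝ₀(K) ⊆ V ⊆ Ŝ_N(K)` is regular. -/
theorem stmt4 (n N : ℕ) (hn : 1 ≤ n) (K : Finset (EuclideanSpace ℂ (Fin n))) (hK : K.Nonempty)
    (V : Submodule ℂ (EuclideanSpace ℂ (Fin n) → ℂ))
    (hV : ∀ f ∈ V, IsQuasiPolyDeg K N f)
    (hV0 : ∀ c : EuclideanSpace ℂ (Fin n) → ℂ,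
      (fun z => ∑ ξ ∈ K, c ξ * Complex.exp (pair ξ z)) ∈ V)
    (nrm : V → ℝ) (hnrm : IsNormOn V nrm) :
    IsRegularFor K hK (unitBall V nrm) :=
  stmt4_general n N K hK V hV hV0 nrm hnrm
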